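/- Let a > 0, γ > 0, and x real. Define the associated Charlier polynomials 𝓒_n(x; a, γ) by the recurrence a·𝓒_{n+1} = (n + γ + a − x)·𝓒_n − (n+γ)·𝓒_{n−1}, with 𝓒_{−1} = 0, 𝓒_0 = 1. Then for all n ≥ 0, the convolution formula holds: n!·𝓒_n(x; a, γ) / (γ+1)_n = Σ_{k=0}^n C(n,k) · [γ(−1)^k/(γ+k)] · C_{n−k}(x; a) · C_k(−x−1; −a), where C_m(y; b) = Σ_{j=0}^m [(−m)_j (−y)_j / j!] (−1/b)^j are the Charlier polynomials and C(n,k) is the binomial coefficient. -/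

import Mathlib

/-!
Put `u = C_·(x; a)` and `v = C_·(-x-1; -a)`; both satisfy the three-term Charlier recurrence in
the degree. Pascal's rule and these two recurrences give, for the signed binomial convolution
`G_n = ∑ C(n,k) (-1)^k u_{n-k} v_k`, the first-order relation `a G_{n+1} = (n+1) G_n`. For the
convolution `S_n` weighted by `γ/(γ+k)`, splitting `γ + n = (γ + k) + (n - k)` expresses
`(γ+n) S_n` through `G_n` and a shifted sum to which the recurrence of `u` applies. Hence
`(γ+1)_n S_n` satisfies the same second-order recurrence as `n! 𝓒_n`, with the same initial values.
-/

/-- Pochhammer symbol (rising factorial) of a real number. -/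
noncomputable def poch (a : ℝ) (k : ℕ) : ℝ := ∏ i ∈ Finset.range k, (a + i)

/-- Charlier polynomials \(C_n(x;a)\). -/
noncomputable def charlier (a x : ℝ) (n : ℕ) : ℝ :=
  ∑ k ∈ Finset.range (n + 1),
    poch (-(n : ℝ)) k * poch (-x) k / (Nat.factorial k) * (-1 / a) ^ k

/-- The associated Charlier polynomials, defined by their three-term recurrence
(with association parameter γ and the convention 𝓒₋₁ = 0, 𝓒₀ = 1). -/
def IsAssocCharlier (a γ : ℝ) (C : ℕ → ℝ → ℝ) : Prop :=
  (∀ x, C 0 x = 1) ∧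
  (∀ x, a * C 1 x = γ + a - x) ∧
  (∀ x, ∀ n : ℕ,
    a * C (n + 2) x =
      ((n : ℝ) + 1 + γ + a - x) * C (n + 1) x - ((n : ℝ) + 1 + γ) * C n x)

open Finset
open scoped Nat

section BinomialConvolution

variable {R : Type*}

def binConv [Semiring R] (T : ℕ → ℕ → R) (n : ℕ) : R :=
  ∑ p ∈ antidiagonal n, (n.choose p.1 : R) * T p.1 p.2

theorem binConv_congr [Semiring R] {T T' : ℕ → ℕ → R} {n : ℕ}
    (h : ∀ k i, k + i = n → T k i = T' k i) : binConv T n = binConv T' n :=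
  sum_congr rfl fun p hp => by rw [h p.1 p.2 (mem_antidiagonal.mp hp)]

theorem binConv_add [Semiring R] (T T' : ℕ → ℕ → R) (n : ℕ) :
    binConv (fun k i => T k i + T' k i) n = binConv T n + binConv T' n := by
  simp only [binConv, mul_add, sum_add_distrib]

theorem binConv_sub [Ring R] (T T' : ℕ → ℕ → R) (n : ℕ) :
    binConv (fun k i => T k i - T' k i) n = binConv T n - binConv T' n := by
  simp only [binConv, mul_sub, sum_sub_distrib]

theorem mul_binConv [CommSemiring R] (c : R) (T : ℕ → ℕ → R) (n : ℕ) :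
    c * binConv T n = binConv (fun k i => c * T k i) n := by
  simp only [binConv, mul_sum, mul_left_comm]

theorem binConv_succ [Semiring R] (T : ℕ → ℕ → R) (n : ℕ) :
    binConv T (n + 1) = binConv (fun k i => T k (i + 1)) n + binConv (fun k i => T (k + 1) i) n := by
  rw [binConv, sum_antidiagonal_choose_succ_mul]
  congr 1
  exact sum_congr rfl fun p hp => by
    rw [Nat.choose_symm_of_eq_add (mem_antidiagonal.mp hp).symm]

theorem binConv_natCast_mul_fst [Semiring R] (T : ℕ → ℕ → R) (n : ℕ) :
    binConv (fun k i => (k : R) * T k i) (n + 1) = (n + 1) * binConv (fun k i => T (k + 1) i) n := by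
  rw [binConv, Nat.sum_antidiagonal_succ, binConv, mul_sum]
  simp only [Nat.cast_zero, zero_mul, mul_zero, zero_add]
  refine sum_congr rfl fun p _ => ?_
  rw [← mul_assoc, ← mul_assoc]
  congr 1
  exact_mod_cast congrArg (Nat.cast : ℕ → R) (Nat.add_one_mul_choose_eq n p.1).symm

theorem binConv_natCast_mul_snd [Semiring R] (T : ℕ → ℕ → R) (n : ℕ) :
    binConv (fun k i => (i : R) * T k i) (n + 1) = (n + 1) * binConv (fun k i => T k (i + 1)) n := by
  rw [binConv, Nat.sum_antidiagonal_succ', binConv, mul_sum]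
  simp only [Nat.cast_zero, zero_mul, mul_zero, zero_add]
  refine sum_congr rfl fun p hp => ?_
  rw [← mul_assoc, ← mul_assoc]
  congr 1
  have h := Nat.choose_mul_succ_eq n p.1
  rw [show n + 1 - p.1 = p.2 + 1 by have := mem_antidiagonal.mp hp; omega] at h
  exact_mod_cast congrArg (Nat.cast : ℕ → R) (h.symm.trans (mul_comm _ _))

end BinomialConvolution

theorem poch_succ (b : ℝ) (n : ℕ) : poch b (n + 1) = poch b n * (b + n) :=
  prod_range_succ _ _

theorem poch_eq_ascPochhammer_eval (a : ℝ) (k : ℕ) : poch a k = (ascPochhammer ℝ k).eval a := by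
  induction k with
  | zero => simp [poch]
  | succ k ih => rw [poch_succ, ih, ascPochhammer_succ_eval]

theorem poch_neg_natCast (n k : ℕ) : poch (-n) k = (-1) ^ k * k ! * n.choose k := by
  rw [poch_eq_ascPochhammer_eval, ascPochhammer_eval_neg_eq_descPochhammer,
    descPochhammer_eval_eq_descFactorial, Nat.descFactorial_eq_factorial_mul_choose]
  push_cast
  ring

theorem charlier_eq_binConv (b y : ℝ) (n : ℕ) :
    charlier b y n = binConv (fun k _ => poch (-y) k / b ^ k) n := by
  rw [charlier, binConv, Nat.sum_antidiagonal_eq_sum_range_succ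
    (fun k _ => (n.choose k : ℝ) * (poch (-y) k / b ^ k))]
  refine sum_congr rfl fun k _ => ?_
  rw [poch_neg_natCast]
  field_simp
  ring_nf
  simp [mul_comm k 2, pow_mul]

theorem charlier_zero (b y : ℝ) : charlier b y 0 = 1 := by
  simp [charlier, poch]

-- At `m = 0` the truncated `m - 1` is harmless: that term carries the factor `m`.
def IsCharlierSeq (b y : ℝ) (u : ℕ → ℝ) : Prop :=
  ∀ m : ℕ, b * u (m + 1) = (m + b - y) * u m - m * u (m - 1)

theorem isCharlierSeq_charlier {b : ℝ} (hb : b ≠ 0) (y : ℝ) : IsCharlierSeq b y (charlier b y) := by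
  intro m
  set c : ℕ → ℝ := fun k => poch (-y) k / b ^ k
  have hc : ∀ k : ℕ, b * c (k + 1) = (k - y) * c k := fun k => by
    simp only [c, poch_succ, pow_succ]
    field_simp
    ring
  have hlower : binConv (fun k i => (i : ℝ) * c k) m = m * binConv (fun k _ => c k) (m - 1) := by
    cases m with
    | zero => simp [binConv]
    | succ m => simpa using binConv_natCast_mul_snd (fun k _ => c k) m
  simp only [charlier_eq_binConv]
  calc b * binConv (fun k _ => c k) (m + 1)
      = binConv (fun k i => (m + b - y) * c k - i * c k) m := by
        rw [binConv_succ, mul_add, mul_binConv, mul_binConv, ← binConv_add]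
        refine binConv_congr fun k i hki => ?_
        have hm : (k : ℝ) + i = m := by exact_mod_cast hki
        linear_combination hc k + c k * hm
    _ = (m + b - y) * binConv (fun k _ => c k) m - m * binConv (fun k _ => c k) (m - 1) := by
        rw [binConv_sub, ← mul_binConv, hlower]

section Convolution

variable {a x γ : ℝ} {u v : ℕ → ℝ}

def signedConv (u v : ℕ → ℝ) (n : ℕ) : ℝ :=
  binConv (fun k i => (-1) ^ k * u i * v k) n

noncomputable def weightedConv (γ : ℝ) (u v : ℕ → ℝ) (n : ℕ) : ℝ :=
  binConv (fun k i => γ * (-1) ^ k / (γ + k) * u i * v k) n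

theorem signedConv_succ (hu : IsCharlierSeq a x u) (hv : IsCharlierSeq (-a) (-x - 1) v) (n : ℕ) :
    a * signedConv u v (n + 1) = (n + 1) * signedConv u v n := by
  have hcancel : binConv (fun k i => i * ((-1) ^ k * u (i - 1) * v k)) n
      + binConv (fun k i => k * ((-1) ^ k * u i * v (k - 1))) n = 0 := by
    cases n with
    | zero => simp [binConv]
    | succ n =>
      rw [binConv_natCast_mul_snd, binConv_natCast_mul_fst, ← mul_add, ← binConv_add]
      simp [binConv, pow_succ]
  calc a * signedConv u v (n + 1)
      = binConv (fun k i => (n + 1) * ((-1) ^ k * u i * v k)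
          - (i * ((-1) ^ k * u (i - 1) * v k) + k * ((-1) ^ k * u i * v (k - 1)))) n := by
        rw [signedConv, binConv_succ, mul_add, mul_binConv, mul_binConv, ← binConv_add]
        refine binConv_congr fun k i hki => ?_
        have hn : (k : ℝ) + i = n := by exact_mod_cast hki
        linear_combination (-1) ^ k * v k * hu i + (-1) ^ k * u i * hv k
          + (-1) ^ k * u i * v k * hn
    _ = (n + 1) * signedConv u v n := by
        rw [binConv_sub, binConv_add, hcancel, sub_zero, ← mul_binConv, signedConv]

theorem weightedConv_succ_succ (hγ : ∀ k : ℕ, γ + k ≠ 0) (hu : IsCharlierSeq a x u)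
    (hv : IsCharlierSeq (-a) (-x - 1) v) (n : ℕ) :
    a * (γ + n + 2) * weightedConv γ u v (n + 2) =
      (n + 2) * (n + 1 + γ + a - x) * weightedConv γ u v (n + 1)
        - (n + 2) * (n + 1) * weightedConv γ u v n := by
  set w : ℕ → ℝ := fun k => γ * (-1) ^ k / (γ + k)
  have hw : ∀ k : ℕ, (γ + k) * w k = γ * (-1) ^ k := fun k => mul_div_cancel₀ _ (hγ k)
  -- `γ + n + 2 = (γ + k) + i`, and `γ + k` cancels the denominator of the weight.
  have hsplit : (γ + n + 2) * weightedConv γ u v (n + 2) =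
      γ * signedConv u v (n + 2) + (n + 2) * binConv (fun k i => w k * u (i + 1) * v k) (n + 1) := by
    calc (γ + n + 2) * weightedConv γ u v (n + 2)
        = binConv (fun k i => γ * ((-1) ^ k * u i * v k) + i * (w k * u i * v k)) (n + 2) := by
          rw [weightedConv, mul_binConv]
          refine binConv_congr fun k i hki => ?_
          have hn : (k : ℝ) + i = n + 2 := by exact_mod_cast hki
          linear_combination u i * v k * hw k - w k * u i * v k * hn
      _ = _ := by
          rw [binConv_add, ← mul_binConv, binConv_natCast_mul_snd, signedConv]
          push_cast
          ring
  have hshift : a * binConv (fun k i => w k * u (i + 1) * v k) (n + 1) =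
      (n + 1 + γ + a - x) * weightedConv γ u v (n + 1) - γ * signedConv u v (n + 1)
        - (n + 1) * weightedConv γ u v n := by
    calc a * binConv (fun k i => w k * u (i + 1) * v k) (n + 1)
        = binConv (fun k i => (n + 1 + γ + a - x) * (w k * u i * v k)
            - γ * ((-1) ^ k * u i * v k) - i * (w k * u (i - 1) * v k)) (n + 1) := by
          rw [mul_binConv]
          refine binConv_congr fun k i hki => ?_
          have hn : (k : ℝ) + i = n + 1 := by exact_mod_cast hki
          linear_combination w k * v k * hu i - u i * v k * hw k + w k * u i * v k * hn
      _ = _ := by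
          rw [binConv_sub, binConv_sub, ← mul_binConv, ← mul_binConv, binConv_natCast_mul_snd]
          simp only [Nat.add_sub_cancel, weightedConv, signedConv, w]
  have hG := signedConv_succ hu hv (n + 1)
  push_cast at hG
  linear_combination a * hsplit + (n + 2) * hshift + γ * hG

theorem weightedConv_zero (hγ : γ ≠ 0) (hu0 : u 0 = 1) (hv0 : v 0 = 1) :
    weightedConv γ u v 0 = 1 := by
  simp [weightedConv, binConv, hu0, hv0, hγ]

theorem weightedConv_one (hγ : ∀ k : ℕ, γ + k ≠ 0) (hu : IsCharlierSeq a x u)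
    (hv : IsCharlierSeq (-a) (-x - 1) v) (hu0 : u 0 = 1) (hv0 : v 0 = 1) :
    a * (γ + 1) * weightedConv γ u v 1 = γ + a - x := by
  have hu1 : a * u 1 = a - x := by simpa [hu0] using hu 0
  have hv1 : -a * v 1 = -a - (-x - 1) := by simpa [hv0] using hv 0
  have hγ0 : γ ≠ 0 := by simpa using hγ 0
  have hγ1 : γ + 1 ≠ 0 := by simpa using hγ 1
  have hS1 : weightedConv γ u v 1 = u 1 - γ / (γ + 1) * v 1 := by
    simp [weightedConv, binConv, Nat.sum_antidiagonal_succ, hu0, hv0, hγ0, sub_eq_add_neg, neg_div]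
  rw [hS1]
  field_simp
  linear_combination (γ + 1) * hu1 + γ * hv1

end Convolution

theorem eq_of_second_order_recurrence {K : Type*} [CommRing K] [IsDomain K]
    {c p q f g : ℕ → K} (hc : ∀ n, c n ≠ 0)
    (hf : ∀ n, c n * f (n + 2) = p n * f (n + 1) - q n * f n)
    (hg : ∀ n, c n * g (n + 2) = p n * g (n + 1) - q n * g n)
    (h0 : f 0 = g 0) (h1 : f 1 = g 1) : f = g := by
  have hpair : ∀ n, f n = g n ∧ f (n + 1) = g (n + 1) := by
    intro n
    induction n with
    | zero => exact ⟨h0, h1⟩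
    | succ n ih => exact ⟨ih.2, mul_left_cancel₀ (hc n) (by rw [hf, hg, ih.1, ih.2])⟩
  exact funext fun n => (hpair n).1

theorem IsAssocCharlier.factorial_mul_recurrence {a γ : ℝ} {C : ℕ → ℝ → ℝ}
    (hC : IsAssocCharlier a γ C) (x : ℝ) (n : ℕ) :
    a * ((n + 2)! * C (n + 2) x) = (n + 2) * (n + 1 + γ + a - x) * ((n + 1)! * C (n + 1) x)
      - (n + 2) * (n + 1) * (n + 1 + γ) * (n ! * C n x) := by
  simp only [Nat.factorial_succ]
  push_cast
  linear_combination ((n : ℝ) + 2) * (n + 1) * n ! * hC.2.2 x n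

theorem poch_mul_weightedConv_recurrence {a x γ : ℝ} {u v : ℕ → ℝ} (hγ : ∀ k : ℕ, γ + k ≠ 0)
    (hu : IsCharlierSeq a x u) (hv : IsCharlierSeq (-a) (-x - 1) v) (n : ℕ) :
    a * (poch (γ + 1) (n + 2) * weightedConv γ u v (n + 2)) =
      (n + 2) * (n + 1 + γ + a - x) * (poch (γ + 1) (n + 1) * weightedConv γ u v (n + 1))
      - (n + 2) * (n + 1) * (n + 1 + γ) * (poch (γ + 1) n * weightedConv γ u v n) := by
  rw [poch_succ _ (n + 1), poch_succ _ n]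
  push_cast
  linear_combination poch (γ + 1) n * (γ + 1 + n) * weightedConv_succ_succ hγ hu hv n

theorem assoc_charlier_convolution (a γ x : ℝ) (ha : 0 < a) (hγ : 0 < γ)
    (C : ℕ → ℝ → ℝ) (hC : IsAssocCharlier a γ C) (n : ℕ) :
    (Nat.factorial n : ℝ) * C n x / poch (γ + 1) n =
      ∑ k ∈ Finset.range (n + 1),
        (n.choose k : ℝ) * (γ * (-1) ^ k / (γ + k)) *
          charlier a x (n - k) * charlier (-a) (-x - 1) k := by
  have hγk : ∀ k : ℕ, γ + k ≠ 0 := fun k => by positivity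
  have hu := isCharlierSeq_charlier ha.ne' x
  have hv := isCharlierSeq_charlier (neg_ne_zero.mpr ha.ne') (-x - 1)
  have hpoch : 0 < poch (γ + 1) n := prod_pos fun i _ => by positivity
  have key : (fun m => (m ! : ℝ) * C m x)
      = fun m => poch (γ + 1) m * weightedConv γ (charlier a x) (charlier (-a) (-x - 1)) m := by
    refine eq_of_second_order_recurrence (fun _ => ha.ne') (hC.factorial_mul_recurrence x)
      (poch_mul_weightedConv_recurrence hγk hu hv) ?_ ?_
    · simp [hC.1 x, poch, weightedConv_zero hγ.ne' (charlier_zero _ _) (charlier_zero _ _)]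
    · refine mul_left_cancel₀ ha.ne' ?_
      have h1 := weightedConv_one hγk hu hv (charlier_zero _ _) (charlier_zero _ _)
      have hp1 : poch (γ + 1) 1 = γ + 1 := by simp [poch]
      simp only [hp1, Nat.factorial_one, Nat.cast_one, one_mul]
      linear_combination hC.2.1 x - h1
  rw [div_eq_iff hpoch.ne', congrFun key n, weightedConv, binConv,
    Nat.sum_antidiagonal_eq_sum_range_succ (fun k i => (n.choose k : ℝ) *
      (γ * (-1) ^ k / (γ + k) * charlier a x i * charlier (-a) (-x - 1) k))]
  simp only [mul_assoc, mul_comm (poch (γ + 1) n)]
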